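/- arXiv:1106.4280 — 4 statements merged into one kernel-verified Lean document; each statement's English description precedes it below -/
import Mathlib

section
/- Let (Γ_n)_{n≥0} be a nested sequence of finite index normal subgroups of a group G, and let (D_n)_{n≥0} be an increasing sequence of finite subsets of G such that e ∈ D_n and D_n is a fundamental domain of G/Γ_n for every n. Given an increasing sequence (n_i)_i of indices, define F_0 = D_{n_0} and F_i = ⋃_{v ∈ D_{n_i} ∩ Γ_{n_{i-1}}} v F_{i-1} for i ≥ 1. Then for every i ≥ 0: (1) F_i ⊆ F_{i+1} and F_i is a fundamental domain of G/Γ_{n_i}; (2) F_{i+1} = ⋃_{v ∈ F_{i+1} ∩ Γ_{n_i}} v F_i. -/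
/-- `F` is a fundamental domain of `G/Γ`: it contains exactly one representative
of each left coset of `Γ` in `G`. -/
def IsFundamentalDomain {G : Type*} [Group G] (Γ : Subgroup G) (F : Set G) : Prop :=
  ∀ g : G, ∃! f, f ∈ F ∧ g⁻¹ * f ∈ Γ

theorem stmt1 {G : Type*} [Group G] (Γ : ℕ → Subgroup G)
    (hnested : ∀ n, Γ (n + 1) ≤ Γ n)
    (hnormal : ∀ n, (Γ n).Normal) (hfi : ∀ n, (Γ n).FiniteIndex)
    (D : ℕ → Finset G) (hDmono : ∀ n, D n ⊆ D (n + 1))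
    (heD : ∀ n, (1 : G) ∈ D n)
    (hDfund : ∀ n, IsFundamentalDomain (Γ n) (D n : Set G))
    (ni : ℕ → ℕ) (hni : StrictMono ni)
    (F : ℕ → Set G) (hF0 : F 0 = (D (ni 0) : Set G))
    (hFrec : ∀ i : ℕ,
      F (i + 1) = ⋃ v ∈ (D (ni (i + 1)) : Set G) ∩ (Γ (ni i) : Set G), (fun x => v * x) '' F i) :
    ∀ i : ℕ,
      (F i ⊆ F (i + 1) ∧ IsFundamentalDomain (Γ (ni i)) (F i)) ∧
      F (i + 1) = ⋃ v ∈ F (i + 1) ∩ (Γ (ni i) : Set G), (fun x => v * x) '' F i := by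
  have hΓmono : ∀ m n : ℕ, m ≤ n → Γ n ≤ Γ m := by
    intro m n h
    induction n, h using Nat.le_induction with
    | base => exact le_rfl
    | succ n h ih => exact (hnested n).trans ih
  -- main induction
  have key : ∀ i, (1 : G) ∈ F i ∧ IsFundamentalDomain (Γ (ni i)) (F i) := by
    intro i
    induction i with
    | zero => rw [hF0]; exact ⟨heD _, hDfund _⟩
    | succ i ih =>
      obtain ⟨h1, hfd⟩ := ih
      have hle : Γ (ni (i + 1)) ≤ Γ (ni i) := hΓmono _ _ (hni.monotone (Nat.le_succ i))
      constructor
      · rw [hFrec]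
        exact Set.mem_biUnion ⟨heD _, (Γ (ni i)).one_mem⟩ ⟨1, h1, one_mul 1⟩
      · intro g
        obtain ⟨x, ⟨hxF, hxΓ⟩, hxu⟩ := hfd g
        have hgx : g * x⁻¹ ∈ Γ (ni i) := by
          have := (hnormal (ni i)).conj_mem _ ((Γ (ni i)).inv_mem hxΓ) g
          simpa [mul_assoc] using this
        obtain ⟨v, ⟨hvD, hvΓ'⟩, hvu⟩ := hDfund (ni (i + 1)) (g * x⁻¹)
        have hvΓi : v ∈ Γ (ni i) := by
          have h2 : (g * x⁻¹)⁻¹ * v ∈ Γ (ni i) := hle hvΓ'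
          have := (Γ (ni i)).mul_mem hgx h2
          simpa [mul_assoc] using this
        refine ⟨v * x, ⟨?_, ?_⟩, ?_⟩
        · rw [hFrec]
          exact Set.mem_biUnion ⟨hvD, hvΓi⟩ ⟨x, hxF, rfl⟩
        · have := (hnormal (ni (i + 1))).conj_mem _ hvΓ' x⁻¹
          simpa [mul_assoc] using this
        · rintro f ⟨hfF, hfΓ⟩
          rw [hFrec] at hfF
          simp only [Set.mem_iUnion, Set.mem_image, Set.mem_inter_iff, exists_prop] at hfF
          obtain ⟨w, ⟨hwD, hwΓ⟩, y, hyF, rfl⟩ := hfF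
          have hgyΓ : g⁻¹ * y ∈ Γ (ni i) := by
            have ha : g⁻¹ * (w * y) ∈ Γ (ni i) := hle hfΓ
            have hb : g⁻¹ * w⁻¹ * g ∈ Γ (ni i) := by
              simpa [mul_assoc] using
                (hnormal (ni i)).conj_mem _ ((Γ (ni i)).inv_mem hwΓ) g⁻¹
            have := (Γ (ni i)).mul_mem hb ha
            simpa [mul_assoc] using this
          have hyx : y = x := hxu y ⟨hyF, hgyΓ⟩
          subst hyx
          have hc : (g * y⁻¹)⁻¹ * w ∈ Γ (ni (i + 1)) := by
            have := (hnormal (ni (i + 1))).conj_mem _ hfΓ y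
            simpa [mul_assoc] using this
          have := hvu w ⟨hwD, hc⟩
          rw [this]
  intro i
  have h1F : (1 : G) ∈ F i := (key i).1
  have hfd := (key i).2
  have hle : Γ (ni (i + 1)) ≤ Γ (ni i) := hΓmono _ _ (hni.monotone (Nat.le_succ i))
  have hsub : F i ⊆ F (i + 1) := by
    rw [hFrec]
    intro x hx
    exact Set.mem_biUnion ⟨heD _, (Γ (ni i)).one_mem⟩ ⟨x, hx, one_mul x⟩
  refine ⟨⟨hsub, hfd⟩, ?_⟩
  ext f
  constructor
  · intro hf
    rw [hFrec] at hf
    simp only [Set.mem_iUnion, Set.mem_image, Set.mem_inter_iff, exists_prop] at hf ⊢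
    obtain ⟨w, ⟨hwD, hwΓ⟩, y, hyF, rfl⟩ := hf
    refine ⟨w, ⟨?_, hwΓ⟩, y, hyF, rfl⟩
    rw [hFrec]
    exact Set.mem_biUnion ⟨hwD, hwΓ⟩ ⟨1, h1F, mul_one w⟩
  · intro hf
    simp only [Set.mem_iUnion, Set.mem_image, Set.mem_inter_iff, exists_prop] at hf
    obtain ⟨v, ⟨hvF, hvΓ⟩, x, hxF, rfl⟩ := hf
    rw [hFrec] at hvF ⊢
    simp only [Set.mem_iUnion, Set.mem_image, Set.mem_inter_iff, exists_prop] at hvF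
    obtain ⟨w, ⟨hwD, hwΓ⟩, y, hyF, hwy⟩ := hvF
    have hyΓ : y ∈ Γ (ni i) := by
      have : w⁻¹ * v ∈ Γ (ni i) := (Γ (ni i)).mul_mem ((Γ (ni i)).inv_mem hwΓ) hvΓ
      rw [← hwy] at this
      simpa using this
    obtain ⟨z, hz, hzu⟩ := hfd 1
    have hy1 : y = 1 := by
      have e1 := hzu y ⟨hyF, by simpa using hyΓ⟩
      have e2 := hzu 1 ⟨h1F, by simpa using (Γ (ni i)).one_mem⟩
      rw [e1, e2]
    rw [hy1, mul_one] at hwy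
    subst hwy
    exact Set.mem_biUnion ⟨hwD, hwΓ⟩ ⟨x, hxF, rfl⟩
end

section
/- Let (H,H⁺,u) be a simple dimension group with unit arising as the direct limit of Z → Z^{k_1} → Z^{k_2} → ⋯ with strictly positive transition matrices A_n and unit u = [1,0]. Define modified matrices Ã_n by duplicating the first row of A_n (more precisely: Ã_n has first column all 1's, second column A_n(·,1) − 1 with the first row repeated, and remaining columns A_n(·,j) with the first row repeated). Then (H,H⁺,u) is isomorphic as a unital ordered group to the direct limit Z → Z^{k_1+1} → Z^{k_2+1} → ⋯ with transition matrices Ã_n. -/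
noncomputable section

/-- The single-step homomorphism `ℤ^{k n} → ℤ^{k (n+1)}`, `v ↦ M n • v`. -/
def stepHom (k : ℕ → ℕ) (M : ∀ n, Matrix (Fin (k (n + 1))) (Fin (k n)) ℤ) (n : ℕ) :
    (Fin (k n) → ℤ) →+ (Fin (k (n + 1)) → ℤ) :=
  (M n).mulVecLin.toAddMonoidHom

/-- The transition homomorphisms of the directed system `(ℤ^{k n}, M n)`. -/
def sysHom (k : ℕ → ℕ) (M : ∀ n, Matrix (Fin (k (n + 1))) (Fin (k n)) ℤ) :
    ∀ i j : ℕ, i ≤ j → (Fin (k i) → ℤ) →+ (Fin (k j) → ℤ) :=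
  fun _ _ h => Nat.leRecOn h (fun {m} g => (stepHom k M m).comp g) (AddMonoidHom.id _)

/-- The direct limit `H = lim→ (ℤ^{k n}, M n)`. -/
abbrev DimGroup (k : ℕ → ℕ) (M : ∀ n, Matrix (Fin (k (n + 1))) (Fin (k n)) ℤ) : Type _ :=
  AddCommGroup.DirectLimit (fun n => Fin (k n) → ℤ) (sysHom k M)

/-- The canonical map `[·, n] : ℤ^{k n} → H`. -/
abbrev dgOf (k : ℕ → ℕ) (M : ∀ n, Matrix (Fin (k (n + 1))) (Fin (k n)) ℤ) (n : ℕ) :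
    (Fin (k n) → ℤ) →+ DimGroup k M :=
  AddCommGroup.DirectLimit.of (fun n => Fin (k n) → ℤ) (sysHom k M) n

/-- The positive cone `H⁺ = {[v,n] : v ∈ (ℤ⁺)^{k n}}`. -/
def posCone (k : ℕ → ℕ) (M : ∀ n, Matrix (Fin (k (n + 1))) (Fin (k n)) ℤ) :
    Set (DimGroup k M) :=
  {h | ∃ (n : ℕ) (v : Fin (k n) → ℤ), (∀ i, 0 ≤ v i) ∧ h = dgOf k M n v}

/-- Dimensions of the modified system: `k 0, k 1 + 1, k 2 + 1, …`. -/
def dimAux (d : ℕ → ℕ) : ℕ → ℕ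
  | 0 => d 0
  | n + 1 => d (n + 1) + 1

/-- The row-index map duplicating the first row: `0,1 ↦ 0` and `i+1 ↦ i`. -/
def collapse {m : ℕ} (hm : 0 < m) (i : Fin (m + 1)) : Fin m :=
  ⟨i.val - 1, by have := i.2; omega⟩

/-- The modified matrices `Ã n`: the first row of `A n` is duplicated, the first
column consists of `1`'s, the second column is `A n (·,1) - 1`, and the remaining
columns are those of `A n`.  (`Ã 0` is the `(k 1 + 1) × 1` matrix obtained from
`A 0` by duplicating its first row.) -/
def tildeMat (d : ℕ → ℕ) (hd : ∀ n, 0 < d n)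
    (A : ∀ n, Matrix (Fin (d (n + 1))) (Fin (d n)) ℤ) :
    ∀ n, Matrix (Fin (dimAux d (n + 1))) (Fin (dimAux d n)) ℤ
  | 0 => Matrix.of fun i j => A 0 (collapse (hd 1) i) j
  | n + 1 => Matrix.of fun i j =>
      if j.val = 0 then 1
      else A (n + 1) (collapse (hd (n + 2)) i) (collapse (hd (n + 1)) j)
        - (if j.val = 1 then 1 else 0)

/-! The two Bratteli diagrams are contractions of a common one. Let `dupMat n` duplicate the
first coordinate of `ℤ^{d n}` (the identity for `n = 0`) and let `splitMat n` be `A n` with its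
first column split into a column of ones and `A n (·, 0) - 1`. Then
`splitMat n * dupMat n = A n` and `dupMat (n + 1) * splitMat n = Ã n`, so `[v, n] ↦ [dupMat n v, n]`
and `[w, n] ↦ [splitMat n w, n + 1]` are mutually inverse maps between the limits. Both are
positive, `splitMat n` because the entries of `A n` are at least `1`, and `dupMat 0 = 1` fixes the
unit. -/

open Matrix

section DirectSystem

variable {k : ℕ → ℕ} {M : ∀ n, Matrix (Fin (k (n + 1))) (Fin (k n)) ℤ}

lemma sysHom_self (n : ℕ) (x : Fin (k n) → ℤ) : sysHom k M n n le_rfl x = x := by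
  rw [sysHom, Nat.leRecOn_self]
  rfl

lemma sysHom_succ {i j : ℕ} (h : i ≤ j) (x : Fin (k i) → ℤ) :
    sysHom k M i (j + 1) (h.trans j.le_succ) x = M j *ᵥ sysHom k M i j h x := by
  rw [sysHom, Nat.leRecOn_succ h]
  rfl

lemma sysHom_compatible {P : Type*} [AddCommMonoid P] (g : ∀ n, (Fin (k n) → ℤ) →+ P)
    (hg : ∀ n x, g (n + 1) (M n *ᵥ x) = g n x) (i j : ℕ) (h : i ≤ j) (x : Fin (k i) → ℤ) :
    g j (sysHom k M i j h x) = g i x := by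
  induction j, h using Nat.le_induction with
  | base => rw [sysHom_self]
  | succ j hj ih => rw [sysHom_succ hj, hg, ih]

lemma dgOf_mulVec (n : ℕ) (x : Fin (k n) → ℤ) :
    dgOf k M (n + 1) (M n *ᵥ x) = dgOf k M n x := by
  simpa only [sysHom_succ le_rfl, sysHom_self] using
    AddCommGroup.DirectLimit.of_f (G := fun n => Fin (k n) → ℤ) (f := sysHom k M) n.le_succ x

end DirectSystem

lemma mulVec_nonneg {m n : ℕ} {P : Matrix (Fin m) (Fin n) ℤ} (hP : ∀ i j, 0 ≤ P i j)
    {v : Fin n → ℤ} (hv : ∀ j, 0 ≤ v j) (i : Fin m) : 0 ≤ (P *ᵥ v) i :=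
  show 0 ≤ ∑ j, P i j * v j from Finset.sum_nonneg fun j _ => mul_nonneg (hP i j) (hv j)

section Intertwining

variable {k k' : ℕ → ℕ} {M : ∀ n, Matrix (Fin (k (n + 1))) (Fin (k n)) ℤ}
  {M' : ∀ n, Matrix (Fin (k' (n + 1))) (Fin (k' n)) ℤ}
  (P : ∀ n, Matrix (Fin (k' n)) (Fin (k n)) ℤ)
  (Q : ∀ n, Matrix (Fin (k (n + 1))) (Fin (k' n)) ℤ)
  (hQP : ∀ n, Q n * P n = M n) (hPQ : ∀ n, P (n + 1) * Q n = M' n)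

include hQP hPQ in
lemma dgOf_mulVec_intertwine (n : ℕ) (x : Fin (k n) → ℤ) :
    dgOf k' M' (n + 1) (P (n + 1) *ᵥ (M n *ᵥ x)) = dgOf k' M' n (P n *ᵥ x) := by
  rw [← hQP, ← mulVec_mulVec, mulVec_mulVec _ (P (n + 1)), hPQ, dgOf_mulVec]

include hQP hPQ in
lemma dgOf_mulVec_intertwine_inv (n : ℕ) (w : Fin (k' n) → ℤ) :
    dgOf k M (n + 2) (Q (n + 1) *ᵥ (M' n *ᵥ w)) = dgOf k M (n + 1) (Q n *ᵥ w) := by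
  rw [← hPQ, ← mulVec_mulVec, mulVec_mulVec _ (Q (n + 1)), hQP, dgOf_mulVec]

def intertwineHom : DimGroup k M →+ DimGroup k' M' :=
  AddCommGroup.DirectLimit.lift _ _ _
    (fun n => (dgOf k' M' n).comp (P n).mulVecLin.toAddMonoidHom)
    (sysHom_compatible _ (dgOf_mulVec_intertwine P Q hQP hPQ))

def intertwineHomInv : DimGroup k' M' →+ DimGroup k M :=
  AddCommGroup.DirectLimit.lift _ _ _
    (fun n => (dgOf k M (n + 1)).comp (Q n).mulVecLin.toAddMonoidHom)
    (sysHom_compatible _ (dgOf_mulVec_intertwine_inv P Q hQP hPQ))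

lemma intertwineHom_dgOf (n : ℕ) (v : Fin (k n) → ℤ) :
    intertwineHom P Q hQP hPQ (dgOf k M n v) = dgOf k' M' n (P n *ᵥ v) :=
  AddCommGroup.DirectLimit.lift_of _ _ _ _ _

lemma intertwineHomInv_dgOf (n : ℕ) (w : Fin (k' n) → ℤ) :
    intertwineHomInv P Q hQP hPQ (dgOf k' M' n w) = dgOf k M (n + 1) (Q n *ᵥ w) :=
  AddCommGroup.DirectLimit.lift_of _ _ _ _ _

def intertwineEquiv : DimGroup k M ≃+ DimGroup k' M' where
  toFun := intertwineHom P Q hQP hPQ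
  invFun := intertwineHomInv P Q hQP hPQ
  left_inv z := by
    induction z using AddCommGroup.DirectLimit.induction_on with
    | ih n v =>
      rw [intertwineHom_dgOf, intertwineHomInv_dgOf, mulVec_mulVec, hQP, dgOf_mulVec]
  right_inv z := by
    induction z using AddCommGroup.DirectLimit.induction_on with
    | ih n w =>
      rw [intertwineHomInv_dgOf, intertwineHom_dgOf, mulVec_mulVec, hPQ, dgOf_mulVec]
  map_add' := map_add _

lemma intertwineEquiv_dgOf (n : ℕ) (v : Fin (k n) → ℤ) :
    intertwineEquiv P Q hQP hPQ (dgOf k M n v) = dgOf k' M' n (P n *ᵥ v) :=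
  intertwineHom_dgOf P Q hQP hPQ n v

lemma intertwineEquiv_symm_dgOf (n : ℕ) (w : Fin (k' n) → ℤ) :
    (intertwineEquiv P Q hQP hPQ).symm (dgOf k' M' n w) = dgOf k M (n + 1) (Q n *ᵥ w) :=
  intertwineHomInv_dgOf P Q hQP hPQ n w

lemma image_posCone_intertwineEquiv (hP : ∀ n i j, 0 ≤ P n i j)
    (hQ : ∀ n i j, 0 ≤ Q n i j) :
    intertwineEquiv P Q hQP hPQ '' posCone k M = posCone k' M' := by
  set e := intertwineEquiv P Q hQP hPQ
  refine Set.Subset.antisymm ?_ fun z hz => ⟨e.symm z, ?_, e.apply_symm_apply z⟩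
  · rintro _ ⟨_, ⟨n, v, hv, rfl⟩, rfl⟩
    exact ⟨n, P n *ᵥ v, mulVec_nonneg (hP n) hv, intertwineEquiv_dgOf P Q hQP hPQ n v⟩
  · obtain ⟨n, w, hw, rfl⟩ := hz
    exact ⟨n + 1, Q n *ᵥ w, mulVec_nonneg (hQ n) hw,
      intertwineEquiv_symm_dgOf P Q hQP hPQ n w⟩

end Intertwining

lemma one_apply_nonneg {ι R : Type*} [DecidableEq ι] [Semiring R] [PartialOrder R]
    [ZeroLEOneClass R] (i j : ι) : 0 ≤ (1 : Matrix ι ι R) i j := by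
  rw [one_apply]
  exact ite_nonneg zero_le_one le_rfl

section ColumnSplitting

variable {m : ℕ} (hm : 0 < m)

lemma collapse_zero : collapse hm 0 = ⟨0, hm⟩ := rfl

lemma collapse_succ (i : Fin m) : collapse hm i.succ = i := by
  simp [collapse]

def dupRows : Matrix (Fin (m + 1)) (Fin m) ℤ :=
  (1 : Matrix (Fin m) (Fin m) ℤ).submatrix (collapse hm) id

def splitCols {ι : Type*} (X : Matrix ι (Fin m) ℤ) : Matrix ι (Fin (m + 1)) ℤ :=
  Matrix.of fun i j =>
    if j.val = 0 then 1 else X i (collapse hm j) - if j.val = 1 then 1 else 0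

lemma dupRows_nonneg (i : Fin (m + 1)) (j : Fin m) : 0 ≤ dupRows hm i j :=
  one_apply_nonneg _ _

lemma splitCols_nonneg {ι : Type*} {X : Matrix ι (Fin m) ℤ} (hX : ∀ i j, 0 < X i j)
    (i : ι) (j : Fin (m + 1)) : 0 ≤ splitCols hm X i j := by
  have := hX i (collapse hm j)
  rw [splitCols, of_apply]
  split_ifs <;> omega

lemma dupRows_mul {ι : Type*} (X : Matrix (Fin m) ι ℤ) :
    dupRows hm * X = X.submatrix (collapse hm) id := by
  rw [dupRows, ← Equiv.coe_refl, one_submatrix_mul]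
  rfl

lemma splitCols_mul_dupRows {ι : Type*} (X : Matrix ι (Fin m) ℤ) :
    splitCols hm X * dupRows hm = X := by
  ext i j
  rw [mul_apply, Fin.sum_univ_succ]
  simp only [splitCols, dupRows, of_apply, submatrix_apply, id, collapse_succ, collapse_zero,
    one_apply, Fin.val_succ, Fin.val_zero, mul_ite, mul_one, mul_zero, Finset.sum_ite_eq',
    Finset.mem_univ, if_true, Nat.add_eq_zero_iff, Nat.add_eq_right, one_ne_zero, and_false,
    if_false, one_mul]
  simp only [Fin.ext_iff]
  split_ifs <;> omega

end ColumnSplitting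

section Splitting

variable (d : ℕ → ℕ) (hd : ∀ n, 0 < d n) (A : ∀ n, Matrix (Fin (d (n + 1))) (Fin (d n)) ℤ)

def dupMat : ∀ n, Matrix (Fin (dimAux d n)) (Fin (d n)) ℤ
  | 0 => (1 : Matrix (Fin (d 0)) (Fin (d 0)) ℤ)
  | n + 1 => dupRows (hd (n + 1))

def splitMat : ∀ n, Matrix (Fin (d (n + 1))) (Fin (dimAux d n)) ℤ
  | 0 => A 0
  | n + 1 => splitCols (hd (n + 1)) (A (n + 1))

lemma dupMat_nonneg (n : ℕ) (i : Fin (dimAux d n)) (j : Fin (d n)) :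
    0 ≤ dupMat d hd n i j := by
  cases n
  · exact one_apply_nonneg _ _
  · exact dupRows_nonneg _ _ _

lemma splitMat_nonneg (hpos : ∀ n i j, 0 < A n i j) (n : ℕ) (i : Fin (d (n + 1)))
    (j : Fin (dimAux d n)) : 0 ≤ splitMat d hd A n i j := by
  cases n with
  | zero => exact (hpos 0 i j).le
  | succ n => exact splitCols_nonneg _ (hpos (n + 1)) i j

lemma splitMat_mul_dupMat (n : ℕ) : splitMat d hd A n * dupMat d hd n = A n := by
  cases n with
  | zero => exact Matrix.mul_one (A 0)
  | succ n => exact splitCols_mul_dupRows _ _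

lemma dupMat_mul_splitMat (n : ℕ) :
    dupMat d hd (n + 1) * splitMat d hd A n = tildeMat d hd A n := by
  refine (dupRows_mul _ _).trans ?_
  cases n <;> rfl

end Splitting

theorem stmt6_general (d : ℕ → ℕ) (hd : ∀ n, 0 < d n)
    (A : ∀ n, Matrix (Fin (d (n + 1))) (Fin (d n)) ℤ)
    (hpos : ∀ n i j, 0 < A n i j) :
    ∃ e : DimGroup d A ≃+ DimGroup (dimAux d) (tildeMat d hd A),
      e '' posCone d A = posCone (dimAux d) (tildeMat d hd A) ∧
      e (dgOf d A 0 (fun _ => 1)) =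
        dgOf (dimAux d) (tildeMat d hd A) 0 (fun _ => 1) := by
  have hQP := splitMat_mul_dupMat d hd A
  have hPQ := dupMat_mul_splitMat d hd A
  refine ⟨intertwineEquiv _ _ hQP hPQ, image_posCone_intertwineEquiv _ _ hQP hPQ
    (dupMat_nonneg d hd) (splitMat_nonneg d hd A hpos), ?_⟩
  rw [intertwineEquiv_dgOf]
  exact congrArg _ (one_mulVec _)

theorem stmt6 (d : ℕ → ℕ) (hd0 : d 0 = 1) (hd : ∀ n, 0 < d n)
    (A : ∀ n, Matrix (Fin (d (n + 1))) (Fin (d n)) ℤ)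
    (hpos : ∀ n i j, 0 < A n i j) :
    ∃ e : DimGroup d A ≃+ DimGroup (dimAux d) (tildeMat d hd A),
      e '' posCone d A = posCone (dimAux d) (tildeMat d hd A) ∧
      e (dgOf d A 0 (fun _ => 1)) =
        dgOf (dimAux d) (tildeMat d hd A) 0 (fun _ => 1) :=
  stmt6_general d hd A hpos
end
end

section
/- Let r = (r_n)_{n≥0} be a sequence of integers with r_n ≥ 2 for all n, and let C_r be the additive subgroup of R generated by {(r_0 ⋯ r_n)^{-1} : n ≥ 0}. Then for every p ≥ 2, the set (C_r)^p ∩ Δ(p,1) ∩ {v ∈ R^p : v > 0} is dense in the unit simplex Δ(p,1). -/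
/-!
The group `C_r` contains `1 / (r₀ ⋯ rₙ)` for arbitrarily large denominators, hence the lattice
`(1/N) ℤ` for arbitrarily large `N`. A point `u` of the open simplex is approximated by rounding
all its coordinates down to `(1/N) ℤ` and adding the total rounding error back to one coordinate;
once `1/N` is below every `uᵢ` the result stays positive. Every point of the closed simplex is in
turn a limit of points of the open simplex on the segment towards the barycentre.
-/

open Finset Filter Topology

variable {ι : Type*} [Fintype ι]

theorem nonempty_of_sum_eq_one {u : ι → ℝ} (hsum : ∑ i, u i = 1) : Nonempty ι := by
  by_contra h
  rw [not_nonempty_iff] at h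
  simp at hsum

theorem stdSimplex_subset_closure_pos :
    stdSimplex ℝ ι ⊆ closure {w : ι → ℝ | (∀ i, 0 < w i) ∧ ∑ i, w i = 1} := by
  intro v hv
  have : Nonempty ι := nonempty_of_sum_eq_one hv.2
  have hcard : (0 : ℝ) < Fintype.card ι := by exact_mod_cast Fintype.card_pos
  let c : ι → ℝ := fun _ => (Fintype.card ι : ℝ)⁻¹
  refine closure_mono ?_ (segment_subset_closure_openSegment (left_mem_segment ℝ v c))
  rintro _ ⟨a, b, ha, hb, hab, rfl⟩
  constructor
  · intro i
    have := hv.1 i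
    simp only [Pi.add_apply, Pi.smul_apply, smul_eq_mul, c]
    positivity
  · simp only [c, Pi.add_apply, Pi.smul_apply, smul_eq_mul, Finset.sum_add_distrib,
      ← Finset.mul_sum, hv.2, Finset.sum_const, Finset.card_univ, nsmul_eq_mul]
    rw [mul_one, mul_inv_cancel₀ hcard.ne', mul_one, hab]

theorem exists_mem_addSubgroup_near {G : AddSubgroup ℝ} {N : ℕ} (hN : 0 < N)
    (hNG : (N : ℝ)⁻¹ ∈ G) {u : ι → ℝ} (hu : ∀ i, (N : ℝ)⁻¹ ≤ u i) (hsum : ∑ i, u i = 1) :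
    ∃ w : ι → ℝ, ((∀ i, w i ∈ G) ∧ (∀ i, 0 < w i) ∧ ∑ i, w i = 1) ∧
      dist w u ≤ (Fintype.card ι + 1) / N := by
  classical
  obtain ⟨i₀⟩ := nonempty_of_sum_eq_one hsum
  have hN' : (0 : ℝ) < N := by exact_mod_cast hN
  let f : ι → ℝ := fun i => ⌊N * u i⌋ * (N : ℝ)⁻¹
  have hf_le (i : ι) : f i ≤ u i := by
    calc f i ≤ (N * u i) * (N : ℝ)⁻¹ :=
          mul_le_mul_of_nonneg_right (Int.floor_le _) (inv_nonneg.2 hN'.le)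
      _ = u i := by field_simp
  have hf_gt (i : ι) : u i - (N : ℝ)⁻¹ < f i := by
    calc u i - (N : ℝ)⁻¹ = (N * u i - 1) * (N : ℝ)⁻¹ := by field_simp
      _ < f i := mul_lt_mul_of_pos_right (by linarith [Int.lt_floor_add_one (N * u i)])
          (inv_pos.2 hN')
  have hf_pos (i : ι) : 0 < f i := by
    have : (1 : ℤ) ≤ ⌊N * u i⌋ := by
      rw [Int.le_floor, Int.cast_one, ← inv_mul_le_iff₀ hN', mul_one]
      exact hu i
    have : (1 : ℝ) ≤ ⌊N * u i⌋ := by exact_mod_cast this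
    simp only [f]
    positivity
  have hf_mem (i : ι) : f i ∈ G := by
    simpa only [f, zsmul_eq_mul] using G.zsmul_mem hNG ⌊N * u i⌋
  let d := 1 - ∑ i, f i
  have hd_mem : d ∈ G := by
    refine G.sub_mem ?_ (G.sum_mem fun i _ => hf_mem i)
    simpa [nsmul_eq_mul, hN'.ne'] using G.nsmul_mem hNG N
  have hd_eq : d = ∑ i, (u i - f i) := by rw [Finset.sum_sub_distrib, hsum]
  have hd_nonneg : 0 ≤ d := hd_eq ▸ Finset.sum_nonneg fun i _ => sub_nonneg.2 (hf_le i)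
  have hd_le : d ≤ Fintype.card ι / N := by
    calc d ≤ ∑ _i : ι, (N : ℝ)⁻¹ := hd_eq ▸ Finset.sum_le_sum fun i _ => by linarith [hf_gt i]
      _ = Fintype.card ι / N := by simp [div_eq_mul_inv]
  have hf_dist : dist f u ≤ 1 / N := by
    refine (dist_pi_le_iff (by positivity)).2 fun i => ?_
    rw [Real.dist_eq, abs_sub_le_iff, one_div]
    constructor <;> linarith [hf_le i, hf_gt i]
  let e : ι → ℝ := Pi.single i₀ d
  refine ⟨f + e, ⟨fun i => G.add_mem (hf_mem i) ?_, fun i => ?_, ?_⟩, ?_⟩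
  · simp only [e, Pi.single_apply]
    split_ifs
    exacts [hd_mem, G.zero_mem]
  · exact add_pos_of_pos_of_nonneg (hf_pos i) ((Pi.single_nonneg.2 hd_nonneg : 0 ≤ e) i)
  · simp [e, Finset.sum_add_distrib, d]
  · calc dist (f + e) u ≤ dist (f + e) f + dist f u := dist_triangle _ _ _
      _ ≤ Fintype.card ι / N + 1 / N := by
        rw [dist_self_add_left, Pi.norm_single, Real.norm_of_nonneg hd_nonneg]
        exact add_le_add hd_le hf_dist
      _ = (Fintype.card ι + 1) / N := by rw [add_div]

theorem stdSimplex_subset_closure_addSubgroup {G : AddSubgroup ℝ}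
    (hG : ∃ᶠ N : ℕ in atTop, (N : ℝ)⁻¹ ∈ G) :
    stdSimplex ℝ ι ⊆ closure {w : ι → ℝ | (∀ i, w i ∈ G) ∧ (∀ i, 0 < w i) ∧ ∑ i, w i = 1} := by
  refine stdSimplex_subset_closure_pos.trans (closure_minimal ?_ isClosed_closure)
  rintro u ⟨hpos, hsum⟩
  refine Metric.mem_closure_iff.2 fun ε hε => ?_
  have hinv : Tendsto (fun N : ℕ => (N : ℝ)⁻¹) atTop (𝓝 0) :=
    tendsto_inv_atTop_zero.comp tendsto_natCast_atTop_atTop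
  have hlarge : ∀ᶠ N : ℕ in atTop,
      0 < N ∧ (∀ i, (N : ℝ)⁻¹ ≤ u i) ∧ (Fintype.card ι + 1) / N < ε :=
    (eventually_gt_atTop 0).and <|
      (eventually_all.2 fun i => hinv.eventually (ge_mem_nhds (hpos i))).and
        ((tendsto_const_div_atTop_nhds_zero_nat _).eventually (gt_mem_nhds hε))
  obtain ⟨N, hNG, hN, hu, hNε⟩ := (hG.and_eventually hlarge).exists
  obtain ⟨w, hw, hdist⟩ := exists_mem_addSubgroup_near hN hNG hu hsum
  exact ⟨w, hw, (dist_comm u w).trans_lt (hdist.trans_lt hNε)⟩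

theorem frequently_inv_mem_closure_inv_prod (r : ℕ → ℕ) (hr : ∀ n, 2 ≤ r n) :
    ∃ᶠ N : ℕ in atTop, (N : ℝ)⁻¹ ∈
      AddSubgroup.closure {x : ℝ | ∃ n : ℕ, x = (∏ m ∈ range (n + 1), (r m : ℝ))⁻¹} := by
  refine frequently_atTop.2 fun a =>
    ⟨∏ m ∈ range (a + 1), r m, ?_, AddSubgroup.subset_closure ⟨a, by push_cast; rfl⟩⟩
  calc a ≤ 2 ^ (a + 1) := by have := @Nat.lt_pow_self (a + 1) 2 one_lt_two; omega
    _ = ∏ _m ∈ range (a + 1), 2 := by simp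
    _ ≤ ∏ m ∈ range (a + 1), r m := prod_le_prod' fun m _ => hr m

theorem stmt8_general (r : ℕ → ℕ) (hr : ∀ n, 2 ≤ r n) (p : ℕ) :
    ∀ v : Fin p → ℝ, (∀ i, 0 ≤ v i) → (∑ i, v i) = 1 →
      v ∈ closure {w : Fin p → ℝ |
        (∀ i, w i ∈ AddSubgroup.closure {x : ℝ | ∃ n : ℕ, x = (∏ m ∈ range (n + 1), (r m : ℝ))⁻¹}) ∧
        (∀ i, 0 < w i) ∧ (∑ i, w i) = 1} :=
  fun _ hv hsum =>
    stdSimplex_subset_closure_addSubgroup (frequently_inv_mem_closure_inv_prod r hr) ⟨hv, hsum⟩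

theorem stmt8 (r : ℕ → ℕ) (hr : ∀ n, 2 ≤ r n) (p : ℕ) (hp : 2 ≤ p) :
    ∀ v : Fin p → ℝ, (∀ i, 0 ≤ v i) → (∑ i, v i) = 1 →
      v ∈ closure {w : Fin p → ℝ |
        (∀ i, w i ∈ AddSubgroup.closure {x : ℝ | ∃ n : ℕ, x = (∏ m ∈ range (n + 1), (r m : ℝ))⁻¹}) ∧
        (∀ i, 0 < w i) ∧ (∑ i, w i) = 1} :=
  stmt8_general r hr p
end

section
/- Let (A_n)_{n≥1} and (B_n)_{n≥1} be sequences of maps on simplices with A_n, B_n : Δ(n+3,1) → Δ(n+2,1) linear, such that Σ_{n≥1} sup{‖A_n v − B_n v‖_1 : v ∈ Δ(n+3,1)} < ∞. Then the inverse limits lim←(Δ(n+2,1), A_n) and lim←(Δ(n+2,1), B_n) are affinely homeomorphic. -/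
/-- The simplex `Δ(k,p) = {v ∈ (ℝ⁺)^k : Σ v_i = 1/p}`; `Δ(k,1)` is the unit simplex. -/
def simplexSet (k : ℕ) (p : ℕ) : Set (Fin k → ℝ) :=
  {v | (∀ i, 0 ≤ v i) ∧ (∑ i, v i) = 1 / (p : ℝ)}

/-- The sets `S ⊆ E` and `T ⊆ F` are affinely homeomorphic. -/
def AffinelyHomeomorphic {E F : Type*}
    [AddCommGroup E] [Module ℝ E] [TopologicalSpace E]
    [AddCommGroup F] [Module ℝ F] [TopologicalSpace F]
    (S : Set E) (T : Set F) : Prop :=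
  ∃ f : S ≃ₜ T, ∀ (x y z : S) (t : ℝ), 0 ≤ t → t ≤ 1 →
    (z : E) = t • (x : E) + (1 - t) • (y : E) →
    (f z : F) = t • (f x : F) + (1 - t) • (f y : F)

/-!
For `x` in the `A`-inverse limit, the points `B n ∘ ⋯ ∘ B (n+m-1) (x (n+m))` form an `ℓ¹`-Cauchy
sequence in `m`: consecutive terms differ by `B n ∘ ⋯ ∘ B (n+m-1)` applied to
`(B (n+m) - A (n+m)) (x (n+m+1))`, and a linear map sending simplex to simplex is an `ℓ¹`
contraction, so the step is at most `ε (n+m)`, where `ε` is the summable series of the hypothesis.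
The limits form a point of the `B`-inverse limit that is `ℓ¹`-close to `x` at level `n`, up to the
tail `∑_{j ≥ n} ε j`. The resulting map is a uniform limit of continuous linear maps, and the same
construction with `A` and `B` exchanged inverts it because the tails tend to zero.
-/

open Filter Topology Finset Set

lemma single_mem_simplexSet {k : ℕ} (j : Fin k) : Pi.single j (1 : ℝ) ∈ simplexSet k 1 :=
  ⟨fun i => by by_cases h : i = j <;> simp [h], by simp⟩

lemma isClosed_simplexSet (k p : ℕ) : IsClosed (simplexSet k p) := by
  simp only [simplexSet, ofPred_and, ofPred_forall]
  exact (isClosed_iInter fun i => isClosed_le continuous_const (continuous_apply i)).inter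
    (isClosed_eq (continuous_finsetSum _ fun i _ => continuous_apply i) continuous_const)

lemma dist_toLp_one {k : ℕ} (u v : Fin k → ℝ) :
    dist (WithLp.toLp 1 u) (WithLp.toLp 1 v) = ∑ i, |u i - v i| := by
  simp [PiLp.dist_eq_of_L1, Real.dist_eq]

lemma sum_abs_map_le_of_mapsTo {a b : ℕ} {T : (Fin a → ℝ) →ₗ[ℝ] (Fin b → ℝ)}
    (hT : MapsTo T (simplexSet a 1) (simplexSet b 1)) (u : Fin a → ℝ) :
    ∑ i, |T u i| ≤ ∑ j, |u j| := by
  set e : Fin a → Fin a → ℝ := fun j => Pi.single j 1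
  have he : ∀ j, T (e j) ∈ simplexSet b 1 := fun j => hT (single_mem_simplexSet j)
  have hTu : ∀ i, T u i = ∑ j, u j * T (e j) i := fun i => by
    conv_lhs => rw [pi_eq_sum_univ' u, map_sum]
    simp [e]
  calc ∑ i, |T u i| ≤ ∑ i, ∑ j, |u j| * T (e j) i := by
        refine sum_le_sum fun i _ => (hTu i ▸ abs_sum_le_sum_abs _ _).trans_eq ?_
        simp only [abs_mul, abs_of_nonneg ((he _).1 i)]
    _ = ∑ j, |u j| * ∑ i, T (e j) i := by rw [sum_comm]; simp_rw [mul_sum]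
    _ = ∑ j, |u j| := by simp [(he _).2]

abbrev BondingMaps : Type := ∀ n : ℕ, (Fin (n + 3) → ℝ) →ₗ[ℝ] (Fin (n + 2) → ℝ)

/-- `bondingMap C n k = C n ∘ C (n + 1) ∘ ⋯ ∘ C (n + k - 1)`, from level `n + k` down to level `n`. -/
def bondingMap (C : BondingMaps) :
    (n k : ℕ) → (Fin (n + k + 2) → ℝ) →ₗ[ℝ] (Fin (n + 2) → ℝ)
  | _, 0 => LinearMap.id
  | n, k + 1 => (bondingMap C n k).comp (C (n + k))

def invLimit (C : BondingMaps) : Set (∀ n : ℕ, Fin (n + 2) → ℝ) :=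
  {v | (∀ n, v n ∈ simplexSet (n + 2) 1) ∧ ∀ n, v n = C n (v (n + 1))}

noncomputable def gap (A B : BondingMaps) (n : ℕ) : ℝ :=
  ⨆ v : simplexSet (n + 3) 1, ∑ i, |A n (v : Fin (n + 3) → ℝ) i - B n (v : Fin (n + 3) → ℝ) i|

lemma gap_comm (A B : BondingMaps) : gap A B = gap B A := by
  funext n
  simp only [gap, abs_sub_comm]

section bondingMap

variable {C : BondingMaps}

lemma map_bondingMap_apply (x : ∀ n : ℕ, Fin (n + 2) → ℝ) (n k : ℕ) :
    C n (bondingMap C (n + 1) k (x (n + 1 + k))) = bondingMap C n (k + 1) (x (n + (k + 1))) := by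
  induction k generalizing x with
  | zero => rfl
  | succ k ih => exact ih fun m => C m (x (m + 1))

lemma mapsTo_bondingMap (hC : ∀ n, MapsTo (C n) (simplexSet (n + 3) 1) (simplexSet (n + 2) 1))
    (n k : ℕ) : MapsTo (bondingMap C n k) (simplexSet (n + k + 2) 1) (simplexSet (n + 2) 1) := by
  induction k with
  | zero => exact mapsTo_id _
  | succ k ih => exact ih.comp (hC (n + k))

lemma eq_bondingMap_of_mem_invLimit {x : ∀ n : ℕ, Fin (n + 2) → ℝ} (hx : x ∈ invLimit C)
    (n k : ℕ) : x n = bondingMap C n k (x (n + k)) := by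
  induction k with
  | zero => rfl
  | succ k ih => rw [ih, hx.2 (n + k)]; rfl

end bondingMap

section gap

variable {A B : BondingMaps}

variable (hA : ∀ n, MapsTo (A n) (simplexSet (n + 3) 1) (simplexSet (n + 2) 1))
  (hB : ∀ n, MapsTo (B n) (simplexSet (n + 3) 1) (simplexSet (n + 2) 1))
include hA hB

lemma le_gap {n : ℕ} {v : Fin (n + 3) → ℝ} (hv : v ∈ simplexSet (n + 3) 1) :
    ∑ i, |A n v i - B n v i| ≤ gap A B n := by
  have sum_abs_eq_one {k : ℕ} {w : Fin k → ℝ} (hw : w ∈ simplexSet k 1) : ∑ i, |w i| = 1 := by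
    simpa [abs_of_nonneg (hw.1 _)] using hw.2
  have bdd : BddAbove (range fun w : simplexSet (n + 3) 1 =>
      ∑ i, |A n (w : Fin (n + 3) → ℝ) i - B n (w : Fin (n + 3) → ℝ) i|) := by
    refine ⟨2, forall_mem_range.2 fun w => ?_⟩
    calc _ ≤ ∑ i, (|A n w i| + |B n w i|) := sum_le_sum fun i _ => abs_sub _ _
      _ = 2 := by
        rw [sum_add_distrib, sum_abs_eq_one (hA n w.2), sum_abs_eq_one (hB n w.2)]; norm_num
  exact le_ciSup bdd ⟨v, hv⟩

lemma sum_abs_bondingMap_sub_le (n k : ℕ) {v : Fin (n + k + 3) → ℝ}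
    (hv : v ∈ simplexSet (n + k + 3) 1) :
    ∑ i, |bondingMap B n k (A (n + k) v) i - bondingMap B n k (B (n + k) v) i| ≤ gap A B (n + k) :=
  calc _ = ∑ i, |bondingMap B n k (A (n + k) v - B (n + k) v) i| := by simp
    _ ≤ ∑ i, |(A (n + k) v - B (n + k) v) i| :=
      sum_abs_map_le_of_mapsTo (mapsTo_bondingMap hB n k) _
    _ ≤ gap A B (n + k) := le_gap hA hB hv

end gap

/-- Taken in `PiLp 1`, whose distance is the `ℓ¹` one for which bonding maps are contractions. -/
noncomputable def approx (B : BondingMaps) (x : ∀ n : ℕ, Fin (n + 2) → ℝ) (n m : ℕ) :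
    PiLp 1 (fun _ : Fin (n + 2) => ℝ) :=
  WithLp.toLp 1 (bondingMap B n m (x (n + m)))

noncomputable def transport (B : BondingMaps) (x : ∀ n : ℕ, Fin (n + 2) → ℝ) (n : ℕ) :
    Fin (n + 2) → ℝ :=
  WithLp.ofLp (limUnder atTop (approx B x n))

noncomputable def tail (A B : BondingMaps) (k : ℕ) : ℝ :=
  ∑' j, gap A B (k + j)

lemma tendsto_tail_add (A B : BondingMaps) (n : ℕ) :
    Tendsto (fun m => tail A B (n + m)) atTop (𝓝 0) := by
  have h := (tendsto_sum_nat_add (gap A B)).comp (tendsto_add_atTop_nat n)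
  simpa only [tail, Function.comp_def, add_comm] using h

section transport

variable {A B : BondingMaps}
  (hA : ∀ n, MapsTo (A n) (simplexSet (n + 3) 1) (simplexSet (n + 2) 1))
  (hB : ∀ n, MapsTo (B n) (simplexSet (n + 3) 1) (simplexSet (n + 2) 1))
  (hsum : Summable (gap A B))
  {x : ∀ n : ℕ, Fin (n + 2) → ℝ} (hx : x ∈ invLimit A)

include hA hB hx in
lemma dist_approx_succ_le (n m : ℕ) :
    dist (approx B x n m) (approx B x n (m + 1)) ≤ gap A B (n + m) := by
  rw [approx, approx, dist_toLp_one, hx.2 (n + m)]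
  exact sum_abs_bondingMap_sub_le hA hB n m (hx.1 (n + m + 1))

include hA hB hsum hx in
lemma tendsto_approx (n : ℕ) :
    Tendsto (approx B x n) atTop (𝓝 (WithLp.toLp 1 (transport B x n))) := by
  have hc := cauchySeq_of_dist_le_of_summable _ (dist_approx_succ_le hA hB hx n)
    (hsum.comp_injective (add_right_injective n))
  obtain ⟨L, hL⟩ := cauchySeq_tendsto_of_complete hc
  simpa [transport, hL.limUnder_eq] using hL

include hA hB hsum hx in
lemma dist_approx_le_tail (n m : ℕ) :
    dist (approx B x n m) (WithLp.toLp 1 (transport B x n)) ≤ tail A B (n + m) := by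
  simpa only [tail, add_assoc] using dist_le_tsum_of_dist_le_of_tendsto _
    (dist_approx_succ_le hA hB hx n) (hsum.comp_injective (add_right_injective n))
    (tendsto_approx hA hB hsum hx n) m

include hA hB hsum hx in
lemma sum_abs_transport_sub_le (n : ℕ) : ∑ i, |transport B x n i - x n i| ≤ tail A B n := by
  simpa [approx, dist_toLp_one, abs_sub_comm, bondingMap] using
    dist_approx_le_tail hA hB hsum hx n 0

include hA hB hsum hx in
lemma tendsto_bondingMap_transport (n : ℕ) :
    Tendsto (fun m => bondingMap B n m (x (n + m))) atTop (𝓝 (transport B x n)) :=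
  ((PiLp.continuous_ofLp 1 _).tendsto _).comp (tendsto_approx hA hB hsum hx n)

include hA hB hsum hx in
lemma transport_mem_invLimit : transport B x ∈ invLimit B := by
  refine ⟨fun n => (isClosed_simplexSet _ _).mem_of_tendsto
    (tendsto_bondingMap_transport hA hB hsum hx n)
    (Eventually.of_forall fun m => mapsTo_bondingMap hB n m (hx.1 (n + m))), fun n => ?_⟩
  have h_outer : Tendsto (fun m => B n (bondingMap B (n + 1) m (x (n + 1 + m)))) atTop
      (𝓝 (B n (transport B x (n + 1)))) :=
    ((B n).continuous_of_finiteDimensional.tendsto _).comp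
      (tendsto_bondingMap_transport hA hB hsum hx (n + 1))
  have h_shift : Tendsto (fun m => B n (bondingMap B (n + 1) m (x (n + 1 + m)))) atTop
      (𝓝 (transport B x n)) := by
    simp_rw [map_bondingMap_apply x]
    exact (tendsto_bondingMap_transport hA hB hsum hx n).comp (tendsto_add_atTop_nat 1)
  exact tendsto_nhds_unique h_shift h_outer

include hA hB hsum hx in
/-- `bondingMap A n m` is an `ℓ¹` contraction, so the bound `tail A B (n + m)` on
`‖transport B x - x‖₁` at level `n + m` carries down to level `n`. -/
lemma transport_transport : transport A (transport B x) = x := by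
  have hy := transport_mem_invLimit hA hB hsum hx
  funext n
  suffices h : Tendsto (approx A (transport B x) n) atTop (𝓝 (WithLp.toLp 1 (x n))) from
    WithLp.toLp_injective 1 <| tendsto_nhds_unique
      (tendsto_approx hB hA (gap_comm A B ▸ hsum) hy n) h
  refine tendsto_iff_dist_tendsto_zero.2 <| squeeze_zero (fun _ => dist_nonneg) (fun m => ?_)
    (tendsto_tail_add A B n)
  calc dist (approx A (transport B x) n m) (WithLp.toLp 1 (x n))
      = ∑ i, |bondingMap A n m (transport B x (n + m) - x (n + m)) i| := by
        rw [approx, dist_toLp_one, eq_bondingMap_of_mem_invLimit hx n m]; simp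
    _ ≤ ∑ i, |transport B x (n + m) i - x (n + m) i| :=
        sum_abs_map_le_of_mapsTo (mapsTo_bondingMap hA n m) _
    _ ≤ tail A B (n + m) := sum_abs_transport_sub_le hA hB hsum hx (n + m)

end transport

section homeomorph

variable {A B : BondingMaps}
  (hA : ∀ n, MapsTo (A n) (simplexSet (n + 3) 1) (simplexSet (n + 2) 1))
  (hB : ∀ n, MapsTo (B n) (simplexSet (n + 3) 1) (simplexSet (n + 2) 1))
  (hsum : Summable (gap A B))
include hA hB hsum

/-- `approx` converges to `transport` uniformly on `invLimit A`, at the rate `tail A B`. -/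
lemma continuous_transport : Continuous fun x : invLimit A => transport B x := by
  refine continuous_pi fun n => (PiLp.continuous_ofLp 1 _).comp ?_
  have hcont : ∀ m, Continuous fun x : invLimit A => approx B x n m := fun m =>
    (PiLp.continuous_toLp 1 _).comp ((bondingMap B n m).continuous_of_finiteDimensional.comp
      ((continuous_apply _).comp continuous_subtype_val))
  have hunif : TendstoUniformly (fun m (x : invLimit A) => approx B x n m)
      (fun x => WithLp.toLp 1 (transport B x n)) atTop := by
    refine Metric.tendstoUniformly_iff.2 fun ε hε => ?_
    filter_upwards [(tendsto_tail_add A B n).eventually (gt_mem_nhds hε)] with m hm x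
    rw [dist_comm]
    exact (dist_approx_le_tail hA hB hsum x.2 n m).trans_lt hm
  exact hunif.continuous (Frequently.of_forall hcont)

lemma transport_add_smul {x y z : ∀ n : ℕ, Fin (n + 2) → ℝ} (hx : x ∈ invLimit A)
    (hy : y ∈ invLimit A) (hz : z ∈ invLimit A) {a b : ℝ} (hxyz : z = a • x + b • y) :
    transport B z = a • transport B x + b • transport B y := by
  funext n
  refine tendsto_nhds_unique (tendsto_bondingMap_transport hA hB hsum hz n) ?_
  have h := ((tendsto_bondingMap_transport hA hB hsum hx n).const_smul a).add
    ((tendsto_bondingMap_transport hA hB hsum hy n).const_smul b)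
  simpa [hxyz] using h

noncomputable def transportHomeomorph : invLimit A ≃ₜ invLimit B where
  toFun x := ⟨transport B x, transport_mem_invLimit hA hB hsum x.2⟩
  invFun y := ⟨transport A y, transport_mem_invLimit hB hA (gap_comm A B ▸ hsum) y.2⟩
  left_inv x := Subtype.ext (transport_transport hA hB hsum x.2)
  right_inv y := Subtype.ext (transport_transport hB hA (gap_comm A B ▸ hsum) y.2)
  continuous_toFun := (continuous_transport hA hB hsum).subtype_mk _
  continuous_invFun := (continuous_transport hB hA (gap_comm A B ▸ hsum)).subtype_mk _

end homeomorph

theorem stmt14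
    (A B : ∀ n : ℕ, (Fin (n + 3) → ℝ) →ₗ[ℝ] (Fin (n + 2) → ℝ))
    (hA : ∀ n, ∀ v ∈ simplexSet (n + 3) 1, A n v ∈ simplexSet (n + 2) 1)
    (hB : ∀ n, ∀ v ∈ simplexSet (n + 3) 1, B n v ∈ simplexSet (n + 2) 1)
    (hsum : Summable fun n : ℕ =>
      ⨆ v : (simplexSet (n + 3) 1), ∑ i, |A n (v : Fin (n + 3) → ℝ) i - B n (v : Fin (n + 3) → ℝ) i|) :
    AffinelyHomeomorphic
      {v : ∀ n : ℕ, Fin (n + 2) → ℝ |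
        (∀ n, v n ∈ simplexSet (n + 2) 1) ∧ ∀ n, v n = A n (v (n + 1))}
      {v : ∀ n : ℕ, Fin (n + 2) → ℝ |
        (∀ n, v n ∈ simplexSet (n + 2) 1) ∧ ∀ n, v n = B n (v (n + 1))} :=
  ⟨transportHomeomorph hA hB hsum, fun x y z _ _ _ hz =>
    transport_add_smul hA hB hsum x.2 y.2 z.2 hz⟩
end
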